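/- Let q ≥ 1 and let w be a binary word of length n with 2^q ≤ n < 2^{q+1} that is a factor of the Thue–Morse word t. Then all occurrence positions of w in t are congruent modulo 2^{q−1}: if w(k) = t(i+k) and w(k) = t(j+k) for all k < n, then i ≡ j (mod 2^{q−1}). (Equivalently, w has an extensible 2^{q−1}-reading frame.) -/

import Mathlib

open Fin.NatCast in
/-- The Thue–Morse sequence: sum of binary digits of `n`, mod 2. -/
def tm (n : ℕ) : Fin 2 := ((Nat.digits 2 n).sum : Fin 2)

/-- The factor of the Thue–Morse word of length `n` starting at position `i`. -/
def tmWord (i n : ℕ) : List (Fin 2) := (List.range n).map (fun j => tm (i + j))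

/-- A binary word is a factor of the Thue–Morse word. -/
def IsFactor (w : List (Fin 2)) : Prop := ∃ i : ℕ, w = tmWord i w.length

/-- Number of occurrences of the word `x` as a factor of `u`. -/
def occCount (u x : List (Fin 2)) : ℕ :=
  ((List.range u.length).filter (fun i => (u.drop i).take x.length = x)).length

/-- Two binary words (of equal length) are 2-abelian equivalent: same first letter,
same last letter, and the same number of occurrences of every word of length 2. -/
def TwoAbelianEquiv (u v : List (Fin 2)) : Prop :=
  u.length = v.length ∧ u.take 1 = v.take 1 ∧
  u.drop (u.length - 1) = v.drop (v.length - 1) ∧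
  ∀ x : List (Fin 2), x.length = 2 → occCount u x = occCount v x

/-- `P n` is the 2-abelian complexity of the Thue–Morse word: the number of
2-abelian equivalence classes of factors of length `n`. -/
noncomputable def P (n : ℕ) : ℕ :=
  Nat.card (Quot (fun u v : {w : List (Fin 2) // w.length = n ∧ IsFactor w} =>
    TwoAbelianEquiv u.1 v.1))

/-- `pword w` counts the pairs in `w`: the total number of occurrences of `00` and `11`. -/
def pword (w : List (Fin 2)) : ℕ := occCount w [0, 0] + occCount w [1, 1]

/-- The set of possible pair counts of Thue–Morse factors of length `n`. -/
def pairs (n : ℕ) : Set ℕ :=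
  { m | ∃ w : List (Fin 2), w.length = n ∧ IsFactor w ∧ pword w = m }

/-- The set of possible pair counts of Thue–Morse factors of length `n`
occurring at some odd position (pure odd factors). -/
def PAIRS (n : ℕ) : Set ℕ := { m | ∃ i : ℕ, i % 2 = 1 ∧ pword (tmWord i n) = m }

/-!
Thue–Morse is the fixed point of `0 ↦ 01, 1 ↦ 10`, so a factor of length at least 4 starting at an
even position can only occur at even positions: at an odd position it would force the cube
`tm b = tm (b + 1) = tm (b + 2)`, which the morphism rules out. Two occurrences of the same long
factor therefore have equal parity, and desubstituting both gives two occurrences of a factor of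
half the length at `i / 2` and `j / 2`; induction on `q` yields `i ≡ j [MOD 2 ^ q]` whenever the
factor has length at least `2 ^ (q + 1)`.
-/

lemma Fin.two_add_one_add_one (x : Fin 2) : x + 1 + 1 = x := by
  fin_cases x <;> rfl

lemma tm_two_mul (m : ℕ) : tm (2 * m) = tm m := by
  rcases Nat.eq_zero_or_pos m with rfl | hm
  · rfl
  · rw [tm, Nat.digits_def' one_lt_two (by omega), Nat.mul_mod_right, Nat.mul_div_cancel_left _ two_pos]
    simp [tm]

open Fin.NatCast in
lemma tm_two_mul_add_one (m : ℕ) : tm (2 * m + 1) = tm m + 1 := by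
  rw [tm, Nat.digits_def' one_lt_two (by omega), List.sum_cons,
    show (2 * m + 1) % 2 = 1 by omega, show (2 * m + 1) / 2 = m by omega, Nat.cast_add, add_comm]
  rfl

lemma tm_two_mul_add (m : ℕ) {r : ℕ} (hr : r < 2) : tm (2 * m + r) = tm m + tm r := by
  interval_cases r
  · simpa [show tm 0 = 0 from rfl] using tm_two_mul m
  · exact tm_two_mul_add_one m

lemma tm_add_two_ne (m : ℕ) (h : tm (m + 1) = tm m) : tm (m + 2) ≠ tm (m + 1) := by
  obtain ⟨c, rfl | rfl⟩ := Nat.even_or_odd' m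
  · rw [tm_two_mul_add_one, tm_two_mul] at h
    simp at h
  · rw [show 2 * c + 1 + 1 = 2 * (c + 1) by ring, show 2 * c + 1 + 2 = 2 * (c + 1) + 1 by ring,
      tm_two_mul_add_one, tm_two_mul]
    simp

lemma not_tm_agree_even_odd (a b : ℕ) : ¬ ∀ k < 4, tm (2 * a + k) = tm (2 * b + 1 + k) := by
  intro h
  have h0 := h 0 (by norm_num)
  have h1 := h 1 (by norm_num)
  have h2 := h 2 (by norm_num)
  have h3 := h 3 (by norm_num)
  rw [Nat.add_zero, Nat.add_zero, tm_two_mul, tm_two_mul_add_one] at h0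
  rw [show 2 * b + 1 + 1 = 2 * (b + 1) by ring, tm_two_mul_add_one, tm_two_mul] at h1
  rw [show 2 * a + 2 = 2 * (a + 1) by ring, show 2 * b + 1 + 2 = 2 * (b + 1) + 1 by ring,
    tm_two_mul, tm_two_mul_add_one] at h2
  rw [show 2 * a + 3 = 2 * (a + 1) + 1 by ring, show 2 * b + 1 + 3 = 2 * (b + 2) by ring,
    tm_two_mul_add_one, tm_two_mul] at h3
  have hb : tm (b + 1) = tm b := by rw [← h1, h0]; exact Fin.two_add_one_add_one _
  exact tm_add_two_ne b hb (by rw [← h3, h2]; exact Fin.two_add_one_add_one _)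

lemma mod_two_eq_of_tm_agree {i j : ℕ} (h : ∀ k < 4, tm (i + k) = tm (j + k)) :
    i % 2 = j % 2 := by
  by_contra hne
  rcases Nat.mod_two_eq_zero_or_one i with hi | hi
  · refine not_tm_agree_even_odd (i / 2) (j / 2) fun k hk => ?_
    rw [show 2 * (i / 2) + k = i + k by omega, show 2 * (j / 2) + 1 + k = j + k by omega]
    exact h k hk
  · refine not_tm_agree_even_odd (j / 2) (i / 2) fun k hk => ?_
    rw [show 2 * (j / 2) + k = j + k by omega, show 2 * (i / 2) + 1 + k = i + k by omega]
    exact (h k hk).symm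

lemma tm_add_two_mul (i k : ℕ) : tm (i + 2 * k) = tm (i / 2 + k) + tm (i % 2) := by
  rw [← tm_two_mul_add _ (Nat.mod_lt i two_pos)]
  congr 1
  omega

lemma tm_agree_div_two {n i j : ℕ} (h : ∀ k < n, tm (i + k) = tm (j + k)) (hij : i % 2 = j % 2) :
    ∀ k < n / 2, tm (i / 2 + k) = tm (j / 2 + k) := by
  intro k hk
  have h2k := h (2 * k) (by omega)
  rw [tm_add_two_mul, tm_add_two_mul, hij] at h2k
  exact add_right_cancel h2k

lemma mod_two_pow_eq_of_tm_agree (q : ℕ) {n i j : ℕ} (hn : 2 ^ (q + 1) ≤ n)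
    (h : ∀ k < n, tm (i + k) = tm (j + k)) : i % 2 ^ q = j % 2 ^ q := by
  induction q generalizing n i j with
  | zero => simp only [pow_zero, Nat.mod_one]
  | succ q ih =>
    rw [pow_succ] at hn
    have h4 : 4 ≤ n := by
      have := Nat.one_le_two_pow (n := q)
      rw [pow_succ] at hn
      omega
    have hpar : i % 2 = j % 2 := mod_two_eq_of_tm_agree fun k hk => h k (by omega)
    have hhalf : i / 2 % 2 ^ q = j / 2 % 2 ^ q := ih (by omega) (tm_agree_div_two h hpar)
    rw [pow_succ', Nat.mod_mul, Nat.mod_mul, hpar, hhalf]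

theorem thueMorse_extensible_reading_frame_general (q n : ℕ)
    (h1 : 2 ^ q ≤ n)
    (w : ℕ → Fin 2) (i j : ℕ)
    (hi : ∀ k < n, w k = tm (i + k)) (hj : ∀ k < n, w k = tm (j + k)) :
    i % 2 ^ (q - 1) = j % 2 ^ (q - 1) := by
  rcases q with _ | q
  · simp only [Nat.zero_sub, pow_zero, Nat.mod_one]
  · exact mod_two_pow_eq_of_tm_agree q h1 fun k hk => (hi k hk).symm.trans (hj k hk)

theorem thueMorse_extensible_reading_frame (q n : ℕ) (hq : 1 ≤ q)
    (h1 : 2 ^ q ≤ n) (h2 : n < 2 ^ (q + 1))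
    (w : ℕ → Fin 2) (i j : ℕ)
    (hi : ∀ k < n, w k = tm (i + k)) (hj : ∀ k < n, w k = tm (j + k)) :
    i % 2 ^ (q - 1) = j % 2 ^ (q - 1) :=
  thueMorse_extensible_reading_frame_general q n h1 w i j hi hj
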